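/- If some build from a given configuration (dependency graph and initial shared state) is valid, then every build from that configuration is valid, and all of them produce the same final shared state. -/

import Mathlib

/-- A deterministic task program: a sequence of reads and writes on resources,
where each subsequent access may depend on the values previously read. -/
inductive Prog (R V : Type) where
  | done : Prog R V
  | read (r : R) (k : V → Prog R V) : Prog R V
  | write (r : R) (v : V) (k : Prog R V) : Prog R V

/-- A single recorded access: task `task` reads (`isWrite = false`) or writes
(`isWrite = true`) the value `val` of resource `res`. -/
structure Access (T R V : Type) where
  task : T
  res : R
  isWrite : Bool
  val : V

/-- Execute a schedule (a list of task names; at each step the named task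
performs its next access, if any).  Returns the remaining programs, the final
shared state, and the access sequence (trace) of the build. -/
def exec {T R V : Type} [DecidableEq T] [DecidableEq R]
    (progs : T → Prog R V) (s : R → V) :
    List T → (T → Prog R V) × (R → V) × List (Access T R V)
  | [] => (progs, s, [])
  | t :: ts =>
    match progs t with
    | .done => exec progs s ts
    | .read r k =>
        let res := exec (Function.update progs t (k (s r))) s ts
        (res.1, res.2.1, ⟨t, r, false, s r⟩ :: res.2.2)
    | .write r v k =>
        let res := exec (Function.update progs t k) (Function.update s r v) ts
        (res.1, res.2.1, ⟨t, r, true, v⟩ :: res.2.2)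

/-- The schedule completes the build: afterwards every task is done. -/
def Completes {T R V : Type} [DecidableEq T] [DecidableEq R]
    (progs : T → Prog R V) (s : R → V) (sched : List T) : Prop :=
  (exec progs s sched).1 = fun _ => Prog.done

/-- The access sequence (trace) of a build. -/
def trace {T R V : Type} [DecidableEq T] [DecidableEq R]
    (progs : T → Prog R V) (s : R → V) (sched : List T) : List (Access T R V) :=
  (exec progs s sched).2.2

/-- The final shared state of a build. -/
def finalState {T R V : Type} [DecidableEq T] [DecidableEq R]
    (progs : T → Prog R V) (s : R → V) (sched : List T) : R → V :=
  (exec progs s sched).2.1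

/-- All accesses of `f` precede all accesses of `g` in the trace `tr`. -/
def AllBefore {T R V : Type} (tr : List (Access T R V)) (f g : T) : Prop :=
  ∀ (i j : ℕ) (hi : i < tr.length) (hj : j < tr.length),
    (tr.get ⟨i, hi⟩).task = f → (tr.get ⟨j, hj⟩).task = g → i < j

/-- The trace respects the dependency DAG `D`: if `g` depends (directly or
transitively) on `f`, all accesses of `f` precede all accesses of `g`. -/
def RespectsDAG {T R V : Type} (D : T → T → Prop) (tr : List (Access T R V)) : Prop :=
  ∀ f g, Relation.TransGen D f g → AllBefore tr f g

/-- Tasks `t₁`, `t₂` conflict during the trace `tr`: one of them writes a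
resource the other reads or writes. -/
def Conflict {T R V : Type} (tr : List (Access T R V)) (t₁ t₂ : T) : Prop :=
  t₁ ≠ t₂ ∧ ∃ a ∈ tr, ∃ b ∈ tr, a.task = t₁ ∧ b.task = t₂ ∧ a.res = b.res ∧
    (a.isWrite = true ∨ b.isWrite = true)

/-- The build is valid: every conflicting pair of tasks is connected by a
directed path in the dependency graph `D`. -/
def ValidTrace {T R V : Type} (D : T → T → Prop) (tr : List (Access T R V)) : Prop :=
  ∀ t₁ t₂, Conflict tr t₁ t₂ →
    Relation.TransGen D t₁ t₂ ∨ Relation.TransGen D t₂ t₁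

/-- A build from the configuration `(D, progs, s₀)`: a schedule that completes
all tasks and whose trace respects the dependency DAG `D`. -/
def IsBuild {T R V : Type} [DecidableEq T] [DecidableEq R]
    (D : T → T → Prop) (progs : T → Prog R V) (s₀ : R → V) (sched : List T) : Prop :=
  Completes progs s₀ sched ∧ RespectsDAG D (trace progs s₀ sched)

/-!
Fix a valid build `σ` and induct on an arbitrary build `t :: τ`. Let `a` be the first access of
`t`. No access of another task clashing with `a` can precede an access of `t` in `σ`: validity
of `σ` orders the two tasks in the DAG, and either order contradicts one of the two builds
respecting it. Since steps of distinct tasks with non-clashing accesses commute, the first step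
of `t` in `σ` can be moved to the front without changing the outcome, and the induction
hypothesis applies to the remaining schedules. Hence all builds have the same final state and
permuted traces, so the same accesses, the same conflicts, and all are valid.
-/

open scoped List

variable {T R V : Type}

def Prog.nextAccess : Prog R V → Option (R × Bool)
  | .done => none
  | .read r _ => some (r, false)
  | .write r _ _ => some (r, true)

def Access.Clashes (a b : Access T R V) : Prop :=
  a.res = b.res ∧ (a.isWrite = true ∨ b.isWrite = true)

theorem Access.Clashes.symm {a b : Access T R V} (h : a.Clashes b) : b.Clashes a :=
  ⟨h.1.symm, h.2.symm⟩

def stepAccess (progs : T → Prog R V) (s : R → V) (t : T) : Option (Access T R V) :=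
  match progs t with
  | .done => none
  | .read r _ => some ⟨t, r, false, s r⟩
  | .write r v _ => some ⟨t, r, true, v⟩

theorem stepAccess_ne_none {progs : T → Prog R V} {s : R → V} {t : T}
    (h : progs t ≠ .done) : stepAccess progs s t ≠ none := by
  cases hp : progs t <;> simp_all [stepAccess]

theorem task_eq_of_stepAccess_eq_some {progs : T → Prog R V} {s : R → V} {t : T}
    {a : Access T R V} (h : stepAccess progs s t = some a) : a.task = t := by
  cases hp : progs t <;> simp only [stepAccess, hp, reduceCtorEq, Option.some.injEq] at h <;>
    rw [← h]

theorem nextAccess_of_stepAccess_eq_some {progs : T → Prog R V} {s : R → V} {t : T}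
    {a : Access T R V} (h : stepAccess progs s t = some a) :
    (progs t).nextAccess = some (a.res, a.isWrite) := by
  cases hp : progs t <;> simp only [stepAccess, hp, reduceCtorEq, Option.some.injEq] at h <;>
    simp [Prog.nextAccess, ← h]

theorem allBefore_iff_pairwise {tr : List (Access T R V)} {f g : T} :
    AllBefore tr f g ↔
      (∀ x ∈ tr, x.task = f → x.task ≠ g) ∧ tr.Pairwise (fun x y => x.task = g → y.task ≠ f) := by
  simp only [AllBefore, List.get_eq_getElem, List.pairwise_iff_getElem, List.mem_iff_getElem]
  constructor
  · intro h
    refine ⟨?_, fun i j hi hj hij hg hf => absurd (h j i hj hi hf hg) (by omega)⟩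
    rintro _ ⟨i, hi, rfl⟩ hf hg
    exact absurd (h i i hi hi hf hg) (lt_irrefl i)
  · rintro ⟨hdiag, hpair⟩ i j hi hj hf hg
    rcases lt_trichotomy i j with hij | rfl | hji
    · exact hij
    · exact absurd hg (hdiag _ ⟨i, hi, rfl⟩ hf)
    · exact absurd hf (hpair j i hj hi hji hg)

theorem AllBefore.sublist {l tr : List (Access T R V)} {f g : T} (hl : l <+ tr)
    (h : AllBefore tr f g) : AllBefore l f g := by
  rw [allBefore_iff_pairwise] at h ⊢
  exact ⟨fun x hx => h.1 x (hl.subset hx), h.2.sublist hl⟩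

theorem AllBefore.not_sublist_pair {tr : List (Access T R V)} {f g : T} {x y : Access T R V}
    (h : AllBefore tr f g) (hxy : [x, y] <+ tr) (hx : x.task = g) : y.task ≠ f :=
  List.pairwise_pair.mp ((allBefore_iff_pairwise.mp h).2.sublist hxy) hx

theorem RespectsDAG.sublist {D : T → T → Prop} {l tr : List (Access T R V)} (hl : l <+ tr)
    (h : RespectsDAG D tr) : RespectsDAG D l :=
  fun f g hfg => (h f g hfg).sublist hl

theorem ValidTrace.subset {D : T → T → Prop} {l tr : List (Access T R V)} (hl : l ⊆ tr)
    (h : ValidTrace D tr) : ValidTrace D l :=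
  fun t₁ t₂ ⟨hne, a, ha, b, hb, hab⟩ => h t₁ t₂ ⟨hne, a, hl ha, b, hl hb, hab⟩

section

variable [DecidableEq T] [DecidableEq R]

def step (progs : T → Prog R V) (s : R → V) (t : T) : (T → Prog R V) × (R → V) :=
  match progs t with
  | .done => (progs, s)
  | .read r k => (Function.update progs t (k (s r)), s)
  | .write r v k => (Function.update progs t k, Function.update s r v)

theorem exec_cons (progs : T → Prog R V) (s : R → V) (t : T) (ts : List T) :
    exec progs s (t :: ts) =
      ((exec (step progs s t).1 (step progs s t).2 ts).1,
       (exec (step progs s t).1 (step progs s t).2 ts).2.1,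
       (stepAccess progs s t).toList ++ (exec (step progs s t).1 (step progs s t).2 ts).2.2) := by
  cases h : progs t <;> simp [exec, step, stepAccess, h]

theorem exec_cons_of_done {progs : T → Prog R V} {s : R → V} {t : T} (ts : List T)
    (h : progs t = .done) : exec progs s (t :: ts) = exec progs s ts := by
  simp [exec, h]

theorem completes_cons {progs : T → Prog R V} {s : R → V} {t : T} {ts : List T} :
    Completes progs s (t :: ts) ↔ Completes (step progs s t).1 (step progs s t).2 ts := by
  rw [Completes, Completes, exec_cons]

theorem trace_cons (progs : T → Prog R V) (s : R → V) (t : T) (ts : List T) :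
    trace progs s (t :: ts) =
      (stepAccess progs s t).toList ++ trace (step progs s t).1 (step progs s t).2 ts := by
  rw [trace, trace, exec_cons]

theorem finalState_cons (progs : T → Prog R V) (s : R → V) (t : T) (ts : List T) :
    finalState progs s (t :: ts) = finalState (step progs s t).1 (step progs s t).2 ts := by
  rw [finalState, finalState, exec_cons]

theorem exec_done (s : R → V) (ts : List T) :
    exec (fun _ => Prog.done) s ts = (fun _ => Prog.done, s, []) := by
  induction ts with
  | nil => rfl
  | cons t ts ih => rw [exec_cons_of_done ts rfl, ih]

theorem step_fst_apply_of_ne (progs : T → Prog R V) (s : R → V) {t u : T} (h : t ≠ u) :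
    (step progs s u).1 t = progs t := by
  cases hp : progs u <;> simp [step, hp, Function.update_of_ne h]

theorem step_comm {progs : T → Prog R V} {s : R → V} {t u : T} {a b : Access T R V}
    (htu : t ≠ u) (ha : stepAccess progs s t = some a) (hb : stepAccess progs s u = some b)
    (hab : ¬ a.Clashes b) :
    step (step progs s t).1 (step progs s t).2 u =
      step (step progs s u).1 (step progs s u).2 t := by
  unfold stepAccess at ha hb
  cases hpt : progs t <;> cases hpu : progs u <;>
    simp only [hpt, hpu, Option.some.injEq, reduceCtorEq] at ha hb <;> subst ha hb <;>
    simp_all [step, Access.Clashes, Function.update_of_ne htu.symm, Function.update_comm htu] <;>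
    simp [Function.update_of_ne (Ne.symm hab), Function.update_comm hab]

theorem stepAccess_step_of_not_clashes {progs : T → Prog R V} {s : R → V} {t u : T}
    {a b : Access T R V} (htu : t ≠ u) (ha : stepAccess progs s t = some a)
    (hb : stepAccess progs s u = some b) (hab : ¬ a.Clashes b) :
    stepAccess (step progs s u).1 (step progs s u).2 t = stepAccess progs s t := by
  unfold stepAccess at ha hb
  cases hpt : progs t <;> cases hpu : progs u <;>
    simp only [hpt, hpu, Option.some.injEq, reduceCtorEq] at ha hb <;> subst ha hb <;>
    simp_all [step, stepAccess, Access.Clashes]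

theorem exists_mem_trace_of_nextAccess {t : T} {r : R} {w : Bool} :
    ∀ {progs : T → Prog R V} {s : R → V} {σ : List T}, Completes progs s σ →
      (progs t).nextAccess = some (r, w) → ∃ v, ⟨t, r, w, v⟩ ∈ trace progs s σ
  | progs, s, [], hσ, ht => by
    rw [show progs = _ from hσ] at ht
    cases ht
  | progs, s, u :: σ, hσ, ht => by
    rw [trace_cons]
    rcases eq_or_ne t u with rfl | htu
    · cases hp : progs t <;> simp_all [Prog.nextAccess, stepAccess]
    · rw [← step_fst_apply_of_ne progs s htu] at ht
      obtain ⟨v, hv⟩ := exists_mem_trace_of_nextAccess (completes_cons.mp hσ) ht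
      exact ⟨v, List.mem_append_right _ hv⟩

theorem ne_done_of_mem_trace {b : Access T R V} :
    ∀ {progs : T → Prog R V} {s : R → V} {σ : List T}, b ∈ trace progs s σ →
      progs b.task ≠ .done
  | _, _, [], hb => by simp [trace, exec] at hb
  | progs, s, u :: σ, hb => by
    rw [trace_cons, List.mem_append] at hb
    rcases hb with hb | hb
    · cases hp : progs u <;> simp_all [stepAccess]
    · have := ne_done_of_mem_trace hb
      rcases eq_or_ne b.task u with h | h
      · rw [h] at this ⊢
        cases hp : progs u <;> simp_all [step]
      · rwa [step_fst_apply_of_ne progs s h] at this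

theorem exists_mem_trace_task_eq {progs : T → Prog R V} {s : R → V} {σ τ : List T}
    {b : Access T R V} (hτ : Completes progs s τ) (hb : b ∈ trace progs s σ) :
    ∃ c ∈ trace progs s τ, c.task = b.task := by
  have hne := ne_done_of_mem_trace hb
  obtain ⟨⟨r, w⟩, h⟩ : ∃ x, (progs b.task).nextAccess = some x := by
    cases hp : progs b.task <;> simp_all [Prog.nextAccess]
  obtain ⟨v, hv⟩ := exists_mem_trace_of_nextAccess hτ h
  exact ⟨_, hv, rfl⟩

theorem exists_reorder {t : T} {a : Access T R V} :
    ∀ {progs : T → Prog R V} {s : R → V} {σ : List T}, Completes progs s σ →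
      stepAccess progs s t = some a →
      (∀ b c, [b, c] <+ trace progs s σ → b.task ≠ t → c.task = t → ¬ a.Clashes b) →
      ∃ σ₀ pre post, Completes (step progs s t).1 (step progs s t).2 σ₀ ∧
        finalState (step progs s t).1 (step progs s t).2 σ₀ = finalState progs s σ ∧
        trace progs s σ = pre ++ a :: post ∧
        trace (step progs s t).1 (step progs s t).2 σ₀ = pre ++ post
  | progs, s, [], hσ, ha, _ => by
    rw [show progs = _ from hσ] at ha
    cases ha
  | progs, s, u :: σ, hσ, ha, hfree => by
    by_cases hdone : progs u = .done
    · simp only [Completes, trace, finalState, exec_cons_of_done σ hdone] at hσ hfree ⊢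
      exact exists_reorder hσ ha hfree
    rcases eq_or_ne t u with rfl | htu
    · exact ⟨σ, [], _, completes_cons.mp hσ, (finalState_cons ..).symm,
        by rw [trace_cons, ha]; rfl, rfl⟩
    obtain ⟨b, hb⟩ := Option.ne_none_iff_exists'.mp (stepAccess_ne_none (s := s) hdone)
    have htrace : trace progs s (u :: σ) = b :: trace (step progs s u).1 (step progs s u).2 σ := by
      simp [trace_cons, hb]
    have hσ' := completes_cons.mp hσ
    -- `t` still has to perform its access after `b`, so `a` and `b` cannot clash.
    have hab : ¬ a.Clashes b := by
      have ht := nextAccess_of_stepAccess_eq_some ha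
      rw [← step_fst_apply_of_ne progs s htu] at ht
      obtain ⟨v, hv⟩ := exists_mem_trace_of_nextAccess hσ' ht
      refine hfree b ⟨t, a.res, a.isWrite, v⟩ ?_ (task_eq_of_stepAccess_eq_some hb ▸ htu.symm) rfl
      rw [htrace]
      exact (List.singleton_sublist.mpr hv).cons_cons b
    have ha' : stepAccess (step progs s u).1 (step progs s u).2 t = some a := by
      rw [stepAccess_step_of_not_clashes htu ha hb hab, ha]
    have hb' : stepAccess (step progs s t).1 (step progs s t).2 u = some b := by
      rw [stepAccess_step_of_not_clashes htu.symm hb ha (mt Access.Clashes.symm hab), hb]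
    obtain ⟨σ₀, pre, post, hσ₀, hfin, htr, htr₀⟩ := exists_reorder hσ' ha' fun b' c hbc =>
      hfree b' c (htrace ▸ hbc.trans (List.sublist_cons_self b _))
    have hcomm := step_comm htu ha hb hab
    refine ⟨u :: σ₀, b :: pre, post, ?_, ?_, ?_, ?_⟩
    · rwa [completes_cons, hcomm]
    · rw [finalState_cons, hcomm, hfin, finalState_cons]
    · rw [htrace, htr, List.cons_append]
    · rw [trace_cons, hb', hcomm, htr₀]
      rfl

variable {D : T → T → Prop} {progs : T → Prog R V} {s : R → V}

theorem IsBuild.cons {t : T} {τ : List T} (hτ : IsBuild D progs s (t :: τ)) :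
    IsBuild D (step progs s t).1 (step progs s t).2 τ :=
  ⟨completes_cons.mp hτ.1, hτ.2.sublist (trace_cons progs s t τ ▸ List.sublist_append_right _ _)⟩

/-- Validity orders the two tasks in the DAG; `σ` rules out one order and `t :: τ` the other. -/
theorem not_clashes_of_validTrace {σ τ : List T} {t : T} {a : Access T R V}
    (hσ : IsBuild D progs s σ) (hvalid : ValidTrace D (trace progs s σ))
    (hτ : IsBuild D progs s (t :: τ)) (ha : stepAccess progs s t = some a) :
    ∀ b c, [b, c] <+ trace progs s σ → b.task ≠ t → c.task = t → ¬ a.Clashes b := by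
  intro b c hbc hbt hct hab
  have hbσ : b ∈ trace progs s σ := hbc.subset (by simp)
  have hat := task_eq_of_stepAccess_eq_some ha
  obtain ⟨v, hv⟩ := exists_mem_trace_of_nextAccess hσ.1 (nextAccess_of_stepAccess_eq_some ha)
  rcases hvalid t b.task ⟨hbt.symm, _, hv, b, hbσ, rfl, rfl, hab⟩ with htb | hbt'
  · exact (hσ.2 t b.task htb).not_sublist_pair hbc rfl hct
  · obtain ⟨c', hc', hc't⟩ := exists_mem_trace_task_eq hτ.1 hbσ
    have hafter := hτ.2 b.task t hbt'
    rw [trace_cons, ha, Option.toList_some, List.singleton_append] at hc' hafter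
    rcases List.mem_cons.mp hc' with rfl | hc'
    · exact hbt (hc't.symm.trans hat)
    · exact hafter.not_sublist_pair ((List.singleton_sublist.mpr hc').cons_cons a) hat hc't

theorem IsBuild.trace_perm_and_finalState_eq {σ τ : List T} (hσ : IsBuild D progs s σ)
    (hvalid : ValidTrace D (trace progs s σ)) (hτ : IsBuild D progs s τ) :
    trace progs s τ ~ trace progs s σ ∧ finalState progs s τ = finalState progs s σ := by
  induction τ generalizing progs s σ with
  | nil =>
    obtain rfl : progs = fun _ => .done := hτ.1
    simp [trace, finalState, exec_done]
  | cons t τ ih =>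
    by_cases hdone : progs t = .done
    · simp only [IsBuild, Completes, trace, finalState, exec_cons_of_done τ hdone] at hτ ⊢
      exact ih hσ hvalid hτ
    obtain ⟨a, ha⟩ := Option.ne_none_iff_exists'.mp (stepAccess_ne_none (s := s) hdone)
    obtain ⟨σ₀, pre, post, hσ₀, hfin, htr, htr₀⟩ :=
      exists_reorder hσ.1 ha (not_clashes_of_validTrace hσ hvalid hτ ha)
    have hsub : pre ++ post <+ trace progs s σ :=
      htr ▸ (List.sublist_cons_self a post).append_left pre
    obtain ⟨hperm, hfin₀⟩ := ih ⟨hσ₀, htr₀ ▸ hσ.2.sublist hsub⟩ (htr₀ ▸ hvalid.subset hsub.subset)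
      hτ.cons
    refine ⟨?_, by rw [finalState_cons, hfin₀, hfin]⟩
    rw [htr₀] at hperm
    rw [trace_cons, ha, htr, Option.toList_some, List.singleton_append]
    exact (hperm.cons a).trans List.perm_middle.symm

end

theorem valid_configuration_general {T R V : Type} [DecidableEq T] [DecidableEq R]
    (D : T → T → Prop) (progs : T → Prog R V) (s₀ : R → V)
    (hsome : ∃ sched, IsBuild D progs s₀ sched ∧ ValidTrace D (trace progs s₀ sched)) :
    ∀ sched₁ sched₂, IsBuild D progs s₀ sched₁ → IsBuild D progs s₀ sched₂ →
      ValidTrace D (trace progs s₀ sched₁) ∧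
      finalState progs s₀ sched₁ = finalState progs s₀ sched₂ := by
  obtain ⟨σ, hσ, hvalid⟩ := hsome
  intro sched₁ sched₂ h₁ h₂
  obtain ⟨hperm, hfin₁⟩ := hσ.trace_perm_and_finalState_eq hvalid h₁
  obtain ⟨-, hfin₂⟩ := hσ.trace_perm_and_finalState_eq hvalid h₂
  exact ⟨hvalid.subset hperm.subset, hfin₁.trans hfin₂.symm⟩

/-- If some build from a given configuration (dependency DAG, deterministic
tasks, initial shared state) is valid, then every build from that configuration
is valid, and all builds produce the same final shared state. -/
theorem valid_configuration {T R V : Type} [DecidableEq T] [DecidableEq R]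
    [Fintype T] (D : T → T → Prop) (progs : T → Prog R V) (s₀ : R → V)
    (hsome : ∃ sched, IsBuild D progs s₀ sched ∧ ValidTrace D (trace progs s₀ sched)) :
    ∀ sched₁ sched₂, IsBuild D progs s₀ sched₁ → IsBuild D progs s₀ sched₂ →
      ValidTrace D (trace progs s₀ sched₁) ∧
      finalState progs s₀ sched₁ = finalState progs s₀ sched₂ :=
  valid_configuration_general D progs s₀ hsome
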